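/- With p_i(m) = (m + n − i + 1)/(nm + n(n+1)/2), for all x ∈ ℝ and all m: ∑_{i=1}^n p_i(m) F_{n-i+1:n}(x) ≤ F(x) ≤ ∑_{i=1}^n p_i(m) F_{i:n}(x), and both sides converge to F(x) as m → ∞. -/

import Mathlib

open MeasureTheory ProbabilityTheory Finset Filter

/-- The `i`-th order statistic (0-indexed) of the values `X 0 ω, ..., X (n-1) ω`. -/
noncomputable def orderStat {Ω : Type*} {n : ℕ} (X : Fin n → Ω → ℝ) (i : Fin n) (ω : Ω) : ℝ :=
  X (Tuple.sort (fun j => X j ω) i) ω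

/-- The weight `p_{i+1}(m) = (m + n − (i+1) + 1)/(nm + n(n+1)/2)` for `i : Fin n` (0-indexed). -/
noncomputable def weight (n : ℕ) (m : ℕ) (i : Fin n) : ℝ :=
  ((m : ℝ) + n - (i : ℕ)) / (n * m + n * (n + 1) / 2)

/-!
At every `ω` the sorting permutation is a bijection, so exactly as many order statistics as
original values are `≤ x`; integrating, `∑ᵢ F_{i:n}(x) = n F(x)`. Both `F_{i:n}(x)` and the
weights `pᵢ(m)` decrease in `i`, so by Chebyshev's sum inequality the `p(m)`-average of
`F_{i:n}(x)` dominates the uniform average `F(x)`, while the `p(m)`-average of the reversed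
sequence is dominated by it. Both averages tend to the uniform one since `pᵢ(m) → 1/n`.
-/

lemma Finset.card_filter_comp_perm {α : Type*} [Fintype α] (σ : Equiv.Perm α) (p : α → Prop)
    [DecidablePred p] : #{i | p (σ i)} = #{i | p i} :=
  card_equiv σ (by simp)

lemma sum_measure_eq_lintegral_card {Ω ι : Type*} [MeasurableSpace Ω] (μ : Measure Ω) [Fintype ι]
    {p : ι → Ω → Prop} [∀ i ω, Decidable (p i ω)] (hp : ∀ i, MeasurableSet {ω | p i ω}) :
    ∑ i, μ {ω | p i ω} = ∫⁻ ω, (#{i | p i ω} : ENNReal) ∂μ := by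
  simp_rw [← lintegral_indicator_one (hp _)]
  rw [← lintegral_finsetSum _ fun i _ => measurable_one.indicator (hp i)]
  congr 1 with ω
  simp [Set.indicator_apply]

lemma sum_div_card_le_sum_mul_of_monovary {ι : Type*} [Fintype ι] [Nonempty ι] {w f : ι → ℝ}
    (hw : ∑ i, w i = 1) (hwf : Monovary w f) :
    (∑ i, f i) / Fintype.card ι ≤ ∑ i, w i * f i := by
  rw [div_le_iff₀' (by positivity)]
  simpa [hw] using hwf.sum_mul_sum_le_card_mul_sum

lemma sum_mul_le_sum_div_card_of_antivary {ι : Type*} [Fintype ι] [Nonempty ι] {w f : ι → ℝ}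
    (hw : ∑ i, w i = 1) (hwf : Antivary w f) :
    ∑ i, w i * f i ≤ (∑ i, f i) / Fintype.card ι := by
  rw [le_div_iff₀' (by positivity)]
  simpa [hw] using hwf.card_mul_sum_le_sum_mul_sum

section OrderStatistics

variable {Ω : Type*} {n : ℕ} (X : Fin n → Ω → ℝ)

lemma card_orderStat_le (x : ℝ) (ω : Ω) :
    #{i | orderStat X i ω ≤ x} = #{j | X j ω ≤ x} :=
  card_filter_comp_perm (Tuple.sort fun j => X j ω) (fun j => X j ω ≤ x)

lemma orderStat_le_iff_lt_card (i : Fin n) (x : ℝ) (ω : Ω) :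
    orderStat X i ω ≤ x ↔ (i : ℕ) < #{j | X j ω ≤ x} := by
  rw [← card_orderStat_le]
  exact (Tuple.lt_card_le_iff_apply_le_of_monotone (Tuple.monotone_sort fun j => X j ω)).symm

lemma orderStat_le_of_le {i j : Fin n} (hij : i ≤ j) {x : ℝ} {ω : Ω}
    (hj : orderStat X j ω ≤ x) : orderStat X i ω ≤ x :=
  (Tuple.monotone_sort (fun k => X k ω) hij).trans hj

variable [MeasurableSpace Ω] {X}

lemma measurableSet_orderStat_le (hX : ∀ j, Measurable (X j)) (i : Fin n) (x : ℝ) :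
    MeasurableSet {ω | orderStat X i ω ≤ x} := by
  have hcount : Measurable fun ω => #{j | X j ω ≤ x} := by
    simp_rw [card_filter]
    exact Finset.measurable_sum _ fun j _ =>
      Measurable.ite (measurableSet_le (hX j) measurable_const) measurable_const measurable_const
  simp_rw [orderStat_le_iff_lt_card]
  exact hcount measurableSet_Ioi

lemma sum_measure_orderStat_le (μ : Measure Ω) (hX : ∀ j, Measurable (X j)) (x : ℝ) :
    ∑ i, μ {ω | orderStat X i ω ≤ x} = ∑ j, μ {ω | X j ω ≤ x} := by
  rw [sum_measure_eq_lintegral_card μ (measurableSet_orderStat_le hX · x),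
    sum_measure_eq_lintegral_card μ (fun j => measurableSet_le (hX j) measurable_const)]
  simp_rw [card_orderStat_le]

end OrderStatistics

section Weights

variable {n : ℕ} (hn : 0 < n) (m : ℕ)
include hn

lemma weight_denom_pos : (0 : ℝ) < n * m + n * (n + 1) / 2 := by
  have : (0 : ℝ) < n := by exact_mod_cast hn
  positivity

lemma weight_antitone : Antitone (weight n m) := by
  intro i j hij
  have := weight_denom_pos hn m
  unfold weight
  gcongr
  exact_mod_cast hij

lemma sum_weight : ∑ i, weight n m i = 1 := by
  have hgauss (k : ℕ) : ∑ i ∈ range k, (i : ℝ) = k * (k - 1) / 2 := by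
    induction k with
    | zero => simp
    | succ k ih =>
      rw [sum_range_succ, ih]
      push_cast
      ring
  unfold weight
  rw [← sum_div, div_eq_one_iff_eq (weight_denom_pos hn m).ne',
    Fin.sum_univ_eq_sum_range (fun i => (m : ℝ) + n - i), sum_sub_distrib, hgauss]
  simp only [sum_const, card_range, smul_add, nsmul_eq_mul]
  ring

lemma tendsto_weight (i : Fin n) :
    Tendsto (fun m => weight n m i) atTop (nhds (n : ℝ)⁻¹) := by
  have hn' : (0 : ℝ) < n := by exact_mod_cast hn
  have hdenom : Tendsto (fun m : ℕ => (n : ℝ) * m + n * (n + 1) / 2) atTop atTop :=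
    tendsto_atTop_add_const_right _ _ (tendsto_natCast_atTop_atTop.const_mul_atTop hn')
  -- `weight n m i = 1 / n + (n - i - (n + 1) / 2) / (n * m + n * (n + 1) / 2)`
  have hlim := (tendsto_const_nhds (x := ((n : ℝ) - i - (n + 1) / 2))).div_atTop hdenom
  rw [← add_zero (n : ℝ)⁻¹]
  refine (tendsto_const_nhds.add hlim).congr fun m => ?_
  have := weight_denom_pos hn m
  unfold weight
  field_simp
  ring

lemma tendsto_sum_weight_mul (f : Fin n → ℝ) :
    Tendsto (fun m => ∑ i, weight n m i * f i) atTop (nhds ((∑ i, f i) / n)) := by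
  rw [sum_div]
  refine tendsto_finsetSum _ fun i _ => ?_
  rw [div_eq_inv_mul]
  exact (tendsto_weight hn i).mul_const (f i)

end Weights

theorem orderStat_mixture_bounds_weights_general {Ω : Type*} [MeasurableSpace Ω]
    (μ : Measure Ω) [IsProbabilityMeasure μ] (n : ℕ) (hn : 0 < n)
    (X : Fin n → Ω → ℝ) (hmeas : ∀ i, Measurable (X i))
    (F : ℝ → ℝ) (hF : ∀ i x, (μ {ω | X i ω ≤ x}).toReal = F x) :
    ∀ x : ℝ,
      (∀ m : ℕ, 1 ≤ m →
        (∑ i : Fin n, weight n m i * (μ {ω | orderStat X i.rev ω ≤ x}).toReal) ≤ F x ∧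
        F x ≤ ∑ i : Fin n, weight n m i * (μ {ω | orderStat X i ω ≤ x}).toReal) ∧
      Tendsto (fun m : ℕ =>
        ∑ i : Fin n, weight n m i * (μ {ω | orderStat X i.rev ω ≤ x}).toReal)
        atTop (nhds (F x)) ∧
      Tendsto (fun m : ℕ =>
        ∑ i : Fin n, weight n m i * (μ {ω | orderStat X i ω ≤ x}).toReal)
        atTop (nhds (F x)) := by
  intro x
  have : NeZero n := ⟨hn.ne'⟩
  set G : Fin n → ℝ := fun i => (μ {ω | orderStat X i ω ≤ x}).toReal
  have hmean : (∑ i, G i) / n = F x := by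
    rw [← ENNReal.toReal_sum fun i _ => measure_ne_top μ _, sum_measure_orderStat_le μ hmeas x,
      ENNReal.toReal_sum fun j _ => measure_ne_top μ _]
    simp [hF, hn.ne']
  have hmean_rev : (∑ i : Fin n, G i.rev) / n = F x := by
    rwa [Fintype.sum_equiv Fin.revPerm (fun i => G i.rev) G fun _ => rfl]
  have hG : Antitone G := fun i j hij =>
    ENNReal.toReal_mono (measure_ne_top μ _) (measure_mono fun ω => orderStat_le_of_le X hij)
  refine ⟨fun m _ => ⟨?_, ?_⟩, hmean_rev ▸ tendsto_sum_weight_mul hn _,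
    hmean ▸ tendsto_sum_weight_mul hn G⟩
  · simpa only [Function.comp_apply, Fintype.card_fin, hmean_rev] using
      sum_mul_le_sum_div_card_of_antivary (sum_weight hn m)
        ((weight_antitone hn m).antivary (hG.comp Fin.rev_anti))
  · simpa only [Fintype.card_fin, hmean] using
      sum_div_card_le_sum_mul_of_monovary (sum_weight hn m) ((weight_antitone hn m).monovary hG)

/-- Theorem 1, (3) and (4): for the explicit weights `pᵢ(m)`, the mixtures of
order-statistic CDFs sandwich `F` for every `m`, and both converge to `F`. -/
theorem orderStat_mixture_bounds_weights {Ω : Type*} [MeasurableSpace Ω]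
    (μ : Measure Ω) [IsProbabilityMeasure μ] (n : ℕ) (hn : 0 < n)
    (X : Fin n → Ω → ℝ) (hmeas : ∀ i, Measurable (X i))
    (hindep : iIndepFun X μ)
    (F : ℝ → ℝ) (hF : ∀ i x, (μ {ω | X i ω ≤ x}).toReal = F x) :
    ∀ x : ℝ,
      (∀ m : ℕ, 1 ≤ m →
        (∑ i : Fin n, weight n m i * (μ {ω | orderStat X i.rev ω ≤ x}).toReal) ≤ F x ∧
        F x ≤ ∑ i : Fin n, weight n m i * (μ {ω | orderStat X i ω ≤ x}).toReal) ∧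
      Tendsto (fun m : ℕ =>
        ∑ i : Fin n, weight n m i * (μ {ω | orderStat X i.rev ω ≤ x}).toReal)
        atTop (nhds (F x)) ∧
      Tendsto (fun m : ℕ =>
        ∑ i : Fin n, weight n m i * (μ {ω | orderStat X i ω ≤ x}).toReal)
        atTop (nhds (F x)) :=
  orderStat_mixture_bounds_weights_general μ n hn X hmeas F hF
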